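/- arXiv:physics/0510010 — 3 statements merged into one kernel-verified Lean document; each statement's English description precedes it below -/
import Mathlib

section
/- At the position x₀₁ = d/2 + (m_f/(2m_m))(d - 2x_f), the equivalent length of the compound Kater pendulum equals l(x₀₁) = d/2 + 2I₀''/(md) + m_f(m_m + m_f)(d - 2x_f)²/(2·m_m·m·d). -/
/-- At the first characteristic position x₀₁ = d/2 + (m_f/(2m_m))(d - 2x_f), the
equivalent length of the compound Kater pendulum equals
d/2 + 2I₀''/(md) + m_f(m_m + m_f)(d - 2x_f)²/(2 m_m m d). -/
theorem stmt12 (m m_b m_f m_m d K x_f I₀'' I₀' x₀₁ : ℝ)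
    (hmb : 0 < m_b) (hmf : 0 < m_f) (hmm : 0 < m_m) (hd : 0 < d)
    (hm : m = m_b + m_f + m_m)
    (hK : K = (d * m_b / 2 + x_f * m_f) / m)
    (hI' : I₀' = I₀'' + m_f * (x_f - K) ^ 2 + m_b * (d / 2 - K) ^ 2 + m_m * K ^ 2)
    (hx : x₀₁ = d / 2 + (m_f / (2 * m_m)) * (d - 2 * x_f))
    (hh : K + (m_m / m) * x₀₁ ≠ 0) :
    ((m_m * (m - m_m) / m * x₀₁ ^ 2 - 2 * m_m * K * x₀₁ + I₀')
        + m * (K + (m_m / m) * x₀₁) ^ 2) / (m * (K + (m_m / m) * x₀₁))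
      = d / 2 + 2 * I₀'' / (m * d)
        + m_f * (m_m + m_f) * (d - 2 * x_f) ^ 2 / (2 * m_m * m * d) := by
  have hm0 : 0 < m := by rw [hm]; linarith
  have hKval : K + (m_m / m) * x₀₁ = d / 2 := by
    subst hm hx hK
    field_simp
    ring
  rw [hKval] at hh ⊢
  subst hI' hx hK
  field_simp
  ring_nf
  subst hm
  ring
end

section
/- With the Kater pendulum coefficients A₁ = 4π²m_m/(gmK), B₁ = 0, C₁ = 4π²(I₀' + mK²)/(gmK), D₁ = m_m/(mK), A₂ = 4π²m_m/(gm(d-K)), B₂ = -8π²m_m d/(gm(d-K)), C₂ = 4π²(I₀' + m(d-K)²)/(gm(d-K)), D₂ = -m_m/(m(d-K)), assuming K ≠ 0, d ≠ K, g, m, m_m > 0, the resolvent cubic (A₁x² + B₁x + C₁)(1 + D₂x) - (A₂x² + B₂x + C₂)(1 + D₁x) = 0 is, up to the nonzero factor 4π²/(gmK(d-K)), identically equal to the equation (h₁ - h₂)(m h₁ h₂ - I₀) = 0 where h₁ = K + (m_m/m)x, h₂ = d - h₁, and I₀ = m_m(m-m_m)/m·x² - 2m_m K x + I₀'. -/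
open Real

/-- With the Kater pendulum coefficients, the resolvent cubic is, up to the nonzero
factor 4π²/(gmK(d-K)), identically the equation (h₁ - h₂)(m h₁ h₂ - I₀) = 0. -/
theorem stmt16 (m m_m K d I₀' g : ℝ) (hK : K ≠ 0) (hdK : d ≠ K)
    (hg : 0 < g) (hm : 0 < m) (hmm : 0 < m_m) :
    ∀ x : ℝ,
      ((4 * π ^ 2 * m_m / (g * m * K)) * x ^ 2 + 0 * x
          + 4 * π ^ 2 * (I₀' + m * K ^ 2) / (g * m * K))
        * (1 + (-(m_m / (m * (d - K)))) * x)
      - ((4 * π ^ 2 * m_m / (g * m * (d - K))) * x ^ 2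
          + (-(8 * π ^ 2 * m_m * d / (g * m * (d - K)))) * x
          + 4 * π ^ 2 * (I₀' + m * (d - K) ^ 2) / (g * m * (d - K)))
        * (1 + (m_m / (m * K)) * x)
      = (4 * π ^ 2 / (g * m * K * (d - K)))
        * (((K + (m_m / m) * x) - (d - (K + (m_m / m) * x)))
          * (m * (K + (m_m / m) * x) * (d - (K + (m_m / m) * x))
            - (m_m * (m - m_m) / m * x ^ 2 - 2 * m_m * K * x + I₀'))) := by
  intro x
  have hd : d - K ≠ 0 := sub_ne_zero.mpr hdK
  field_simp
  ring
end

section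
/- For positive reals m, I₀'' and d > 0: m d² - 4 I₀'' ≥ 0 if and only if d ≥ 2√(I₀''/m). Moreover, if d ≥ 2( m_f r_f/(m_b + m_m) + √((m_f r_f/(m_b + m_m))² + (m_f r_f² + I₀'')/(m_b + m_m)) ), then d/2 - (1/2)√((m d² - 4I₀'')/m_f) ≤ -r_f, where m = m_b + m_f + m_m and all quantities m_b, m_f, m_m, r_f, I₀'' are positive. -/
/-- Structural conditions: m d² - 4I₀'' ≥ 0 iff d ≥ 2√(I₀''/m); and the stated lower
bound on d guarantees d/2 - (1/2)√((m d² - 4I₀'')/m_f) ≤ -r_f. -/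
theorem stmt19 (m m_b m_f m_m r_f I₀'' d : ℝ)
    (hmb : 0 < m_b) (hmf : 0 < m_f) (hmm : 0 < m_m) (hrf : 0 < r_f)
    (hI : 0 < I₀'') (hd : 0 < d) (hm : m = m_b + m_f + m_m) :
    (m * d ^ 2 - 4 * I₀'' ≥ 0 ↔ d ≥ 2 * Real.sqrt (I₀'' / m)) ∧
    (d ≥ 2 * (m_f * r_f / (m_b + m_m)
        + Real.sqrt ((m_f * r_f / (m_b + m_m)) ^ 2
            + (m_f * r_f ^ 2 + I₀'') / (m_b + m_m))) →
      d / 2 - Real.sqrt ((m * d ^ 2 - 4 * I₀'') / m_f) / 2 ≤ -r_f) := by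
  have hm0 : 0 < m := by rw [hm]; linarith
  constructor
  · constructor
    · intro h
      have h1 : I₀'' / m ≤ (d / 2) ^ 2 := by
        rw [div_le_iff₀ hm0] at *
        nlinarith
      have h2 : Real.sqrt (I₀'' / m) ≤ d / 2 := by
        have := Real.sqrt_le_sqrt h1
        rwa [Real.sqrt_sq (by linarith)] at this
      linarith
    · intro h
      have h2 : Real.sqrt (I₀'' / m) ≤ d / 2 := by linarith
      have h1 : I₀'' / m ≤ (d / 2) ^ 2 := by
        have := Real.sq_sqrt (le_of_lt (div_pos hI hm0))
        nlinarith [Real.sqrt_nonneg (I₀'' / m)]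
      rw [div_le_iff₀ hm0] at h1
      nlinarith
  · intro h
    set M := m_b + m_m with hM
    have hM0 : 0 < M := by positivity
    set a := m_f * r_f / M with ha
    set b := (m_f * r_f ^ 2 + I₀'') / M with hb
    have hab : 0 ≤ a ^ 2 + b := by positivity
    set s := Real.sqrt (a ^ 2 + b) with hs
    have hs0 : 0 ≤ s := Real.sqrt_nonneg _
    have hs2 : s ^ 2 = a ^ 2 + b := Real.sq_sqrt hab
    -- d² - 4 a d - 4 b ≥ 0
    have hkey : d ^ 2 - 4 * a * d - 4 * b ≥ 0 := by nlinarith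
    -- clear denominators: M d² - 4 m_f r_f d - 4 (m_f r_f² + I₀'') ≥ 0
    have ha' : a * M = m_f * r_f := div_mul_cancel₀ _ (ne_of_gt hM0)
    have hb' : b * M = m_f * r_f ^ 2 + I₀'' := div_mul_cancel₀ _ (ne_of_gt hM0)
    have hkey2 : m_f * (d + 2 * r_f) ^ 2 ≤ m * d ^ 2 - 4 * I₀'' := by
      have := mul_le_mul_of_nonneg_right hkey (le_of_lt hM0)
      nlinarith
    have hgoal : d + 2 * r_f ≤ Real.sqrt ((m * d ^ 2 - 4 * I₀'') / m_f) := by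
      have h1 : (d + 2 * r_f) ^ 2 ≤ (m * d ^ 2 - 4 * I₀'') / m_f := by
        rw [le_div_iff₀ hmf]; nlinarith
      have := Real.sqrt_le_sqrt h1
      rwa [Real.sqrt_sq (by linarith)] at this
    linarith
end
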